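/- arXiv:1207.3578 — 8 statements merged into one kernel-verified Lean document; each statement's English description precedes it below -/
import Mathlib

section
/- Let q be a positive integer and let n = a·q + b·(q+1) be a q-partition of the positive integer n. This q-partition is maximal (i.e., a + b is largest among all q-partitions of n) if and only if b < q. -/
/-- A `q`-partition `n = a*q + b*(q+1)` of a positive integer `n`
is maximal (i.e., `a + b` is largest among all `q`-partitions of `n`) iff `b < q`. -/
theorem qPartition_maximal_iff (n q a b : ℕ) (hq : 0 < q) (hn : 0 < n)
    (hpart : n = a * q + b * (q + 1)) :
    (∀ a' b' : ℕ, n = a' * q + b' * (q + 1) → a' + b' ≤ a + b) ↔ b < q := by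
  constructor
  · intro hmax
    by_contra hb
    push_neg at hb
    obtain ⟨c, rfl⟩ := Nat.exists_eq_add_of_le hb
    have h := hmax (a + q + 1) c (by rw [hpart]; ring)
    omega
  · intro hb a' b' h'
    by_contra hlt
    push_neg at hlt
    have key : a * q + b * (q + 1) = a' * q + b' * (q + 1) := by omega
    nlinarith [key, hlt, hb]
end

section
/- Let q be a positive integer and let n = a·q + b·(q+1) be a q-partition of the positive integer n. This q-partition is minimal (i.e., a + b is smallest among all q-partitions of n) if and only if a < q + 1. Moreover, the minimal q-partition is unique. -/
/-- If `a < q+1`, the partition is minimal. -/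
lemma qPart_min_of_lt (n q a b : ℕ) (hpart : n = a * q + b * (q + 1)) (ha : a < q + 1) :
    ∀ a' b' : ℕ, n = a' * q + b' * (q + 1) → a + b ≤ a' + b' := by
  intro a' b' h'
  by_contra hlt
  push_neg at hlt
  -- (a+b)*q + b = (a'+b')*q + b'
  have key : (a + b) * q + b = (a' + b') * q + b' := by
    have := hpart ▸ h'
    ring_nf at this ⊢
    linarith [this]
  obtain ⟨d, hd⟩ : ∃ d, a + b = (a' + b') + (d + 1) := ⟨a + b - (a' + b') - 1, by omega⟩
  rw [hd, add_mul] at key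
  have hq' : q ≤ (d + 1) * q := Nat.le_mul_of_pos_left q (by omega)
  omega

/-- Existence of a partition with `a < q+1`. -/
lemma qPart_exists_small (n q : ℕ) : ∀ a b : ℕ, n = a * q + b * (q + 1) →
    ∃ a' b', n = a' * q + b' * (q + 1) ∧ a' < q + 1 := by
  intro a
  induction a using Nat.strong_induction_on with
  | _ a ih =>
    intro b hpart
    by_cases h : a < q + 1
    · exact ⟨a, b, hpart, h⟩
    · obtain ⟨c, hc⟩ : ∃ c, a = c + (q + 1) := ⟨a - (q + 1), by omega⟩
      apply ih c (by omega) (b + q)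
      rw [hpart, hc]; ring

/-- A `q`-partition `n = a*q + b*(q+1)` of a positive integer `n`
is minimal (i.e., `a + b` is smallest among all `q`-partitions of `n`) iff `a < q + 1`.
Moreover, the minimal `q`-partition is unique. -/
theorem qPartition_minimal_iff_and_unique (n q a b : ℕ) (hq : 0 < q) (hn : 0 < n)
    (hpart : n = a * q + b * (q + 1)) :
    ((∀ a' b' : ℕ, n = a' * q + b' * (q + 1) → a + b ≤ a' + b') ↔ a < q + 1) ∧
    (∃! p : ℕ × ℕ, n = p.1 * q + p.2 * (q + 1) ∧
      ∀ a' b' : ℕ, n = a' * q + b' * (q + 1) → p.1 + p.2 ≤ a' + b') := by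
  constructor
  · constructor
    · intro hmin
      by_contra h
      push_neg at h
      obtain ⟨c, hc⟩ : ∃ c, a = c + (q + 1) := ⟨a - (q + 1), by omega⟩
      have h' : n = c * q + (b + q) * (q + 1) := by rw [hpart, hc]; ring
      have := hmin c (b + q) h'
      omega
    · exact qPart_min_of_lt n q a b hpart
  · obtain ⟨a', b', h', ha'⟩ := qPart_exists_small n q a b hpart
    refine ⟨(a', b'), ⟨h', qPart_min_of_lt n q a' b' h' ha'⟩, ?_⟩
    rintro ⟨x, y⟩ ⟨hxy, hminxy⟩
    have h1 : x + y ≤ a' + b' := hminxy a' b' h'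
    have h2 : a' + b' ≤ x + y := qPart_min_of_lt n q a' b' h' ha' x y hxy
    have hs : x + y = a' + b' := le_antisymm h1 h2
    have key : (x + y) * q + y = (a' + b') * q + b' := by
      have := hxy ▸ h'
      ring_nf at this ⊢
      linarith [this]
    rw [hs] at key
    have : y = b' := by omega
    simp only [Prod.mk.injEq]
    omega
end

section
/- Let q be a positive integer and suppose n = a·q + b·(q+1) is a minimal q-partition of the positive integer n. Then a + b = ⌈n/(q+1)⌉. -/
/-- If `n = a*q + b*(q+1)` is a minimal `q`-partition of the positive
integer `n` (`q` a positive integer), then `a + b = ⌈n/(q+1)⌉`. -/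
theorem qPartition_minimal_addends (n q a b : ℕ) (hq : 0 < q) (hn : 0 < n)
    (hpart : n = a * q + b * (q + 1))
    (hmin : ∀ a' b' : ℕ, n = a' * q + b' * (q + 1) → a + b ≤ a' + b') :
    a + b = ⌈(n : ℚ) / ((q : ℚ) + 1)⌉₊ := by
  set k := ⌈(n : ℚ) / ((q : ℚ) + 1)⌉₊ with hkdef
  have hqpos : (0 : ℚ) < (q : ℚ) + 1 := by positivity
  have hk1 : k ≤ a + b := by
    rw [hkdef]
    apply Nat.ceil_le.mpr
    rw [div_le_iff₀ hqpos]
    have : (n : ℚ) = a * q + b * (q + 1) := by exact_mod_cast congrArg (Nat.cast : ℕ → ℚ) hpart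
    rw [this]
    push_cast
    nlinarith [(Nat.cast_nonneg a : (0:ℚ) ≤ a), (Nat.cast_nonneg b : (0:ℚ) ≤ b),
      (Nat.cast_nonneg q : (0:ℚ) ≤ q)]
  have hk2 : n ≤ k * (q + 1) := by
    have h := Nat.le_ceil ((n : ℚ) / ((q : ℚ) + 1))
    rw [div_le_iff₀ hqpos] at h
    have : (n : ℚ) ≤ (k * (q + 1) : ℕ) := by push_cast; linarith
    exact_mod_cast this
  have hk3 : k * q ≤ n := by
    have : (a + b) * q ≤ n := by nlinarith
    calc k * q ≤ (a + b) * q := Nat.mul_le_mul_right q hk1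
      _ ≤ n := this
  have hexp : k * (q + 1) = k * q + k := by ring
  have hpart' : n = (k - (n - k * q)) * q + (n - k * q) * (q + 1) := by
    have hble : n - k * q ≤ k := by omega
    have h1 : (k - (n - k * q)) * q = k * q - (n - k * q) * q := by
      rw [Nat.sub_mul]
    have h2 : (n - k * q) * (q + 1) = (n - k * q) * q + (n - k * q) := by ring
    rw [h1, h2]
    have h3 : (n - k * q) * q ≤ k * q := Nat.mul_le_mul_right q hble
    omega
  have := hmin _ _ hpart'
  have hble : n - k * q ≤ k := by omega
  omega
end

section
/- Let q and n be positive integers with ⌈n/(q+1)⌉ = ⌊n/q⌋ and suppose n admits a q-partition. Then the q-partition of n is unique: there is exactly one pair (a, b) of nonnegative integers with n = a·q + b·(q+1). -/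
/-- Let `q` and `n` be positive integers with `⌈n/(q+1)⌉ = ⌊n/q⌋`
and suppose `n` admits a `q`-partition. Then there is exactly one pair `(a, b)` of
nonnegative integers with `n = a*q + b*(q+1)`. -/
theorem qPartition_unique_of_ceil_eq_floor (n q : ℕ) (hq : 0 < q) (hn : 0 < n)
    (heq : ⌈(n : ℚ) / ((q : ℚ) + 1)⌉₊ = n / q)
    (hex : ∃ a b : ℕ, n = a * q + b * (q + 1)) :
    ∃! p : ℕ × ℕ, n = p.1 * q + p.2 * (q + 1) := by
  obtain ⟨a0, b0, h0⟩ := hex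
  have key : ∀ a b : ℕ, n = a * q + b * (q + 1) →
      a + b = n / q ∧ b = n - (n / q) * q := by
    intro a b h
    have h2 : n = (a + b) * q + b := by
      rw [add_mul]; rw [mul_add, mul_one] at h; omega
    have hle : a + b ≤ n / q := (Nat.le_div_iff_mul_le hq).mpr (by omega)
    have hge : n / q ≤ a + b := by
      rw [← heq, Nat.ceil_le, div_le_iff₀ (by positivity)]
      have h2' : (n : ℚ) = (a + b) * q + b := by exact_mod_cast h2
      have hb : (b : ℚ) ≤ a + b := by exact_mod_cast Nat.le_add_left b a
      push_cast
      linarith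
    have hk : a + b = n / q := le_antisymm hle hge
    rw [hk] at h2
    exact ⟨hk, by omega⟩
  refine ⟨(a0, b0), h0, ?_⟩
  rintro ⟨a, b⟩ hp
  obtain ⟨k1, c1⟩ := key a b hp
  obtain ⟨k2, c2⟩ := key a0 b0 h0
  have hb : b = b0 := by omega
  have ha : a = a0 := by omega
  simp [ha, hb]
end

section
/- Let q ≥ 2 and n be positive integers, let n = a·q + b·(q+1) be the maximal q-partition of n, and let n = a′·(q−1) + b′·q be the minimal (q−1)-partition of n (both assumed to exist). If q divides n then a + b = a′ + b′; otherwise a + b + 1 = a′ + b′. -/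
/-- Let `q ≥ 2` and `n` be positive integers, let `n = a*q + b*(q+1)`
be the maximal `q`-partition of `n`, and let `n = a'*(q-1) + b'*q` be the minimal
`(q-1)`-partition of `n`. If `q ∣ n` then `a + b = a' + b'`; otherwise
`a + b + 1 = a' + b'`. -/
theorem maximal_vs_minimal_addends (n q a b a' b' : ℕ) (hq : 2 ≤ q) (hn : 0 < n)
    (hab : n = a * q + b * (q + 1))
    (hmax : ∀ x y : ℕ, n = x * q + y * (q + 1) → x + y ≤ a + b)
    (hab' : n = a' * (q - 1) + b' * q)
    (hmin : ∀ x y : ℕ, n = x * (q - 1) + y * q → a' + b' ≤ x + y) :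
    (q ∣ n → a + b = a' + b') ∧ (¬ q ∣ n → a + b + 1 = a' + b') := by
  obtain ⟨p, rfl⟩ : ∃ p, q = p + 1 := ⟨q - 1, by omega⟩
  have hp : 1 ≤ p := by omega
  set m := n / (p + 1) with hm
  set r := n % (p + 1) with hr
  have hq1 : 0 < p + 1 := by omega
  have hdm : n = m * (p + 1) + r := by
    rw [hm, hr, Nat.mul_comm]; exact (Nat.div_add_mod n (p + 1)).symm
  have hr_lt : r < p + 1 := Nat.mod_lt _ hq1
  -- maximal side : a + b = m
  have hab_le : a + b ≤ m := by
    apply Nat.le_div_iff_mul_le hq1 |>.mpr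
    nlinarith [hab]
  have hrb : r ≤ b := by
    have hb : n % (p + 1) = b % (p + 1) := by
      conv_lhs => rw [hab]
      have e : a * (p + 1) + b * (p + 1 + 1) = b + (a + b) * (p + 1) := by ring
      rw [e, Nat.add_mul_mod_self_right]
    calc r = b % (p + 1) := hb
      _ ≤ b := Nat.mod_le _ _
  have hrm : r ≤ m := le_trans (le_trans hrb (Nat.le_add_left b a)) hab_le
  obtain ⟨s, hs⟩ : ∃ s, m = r + s := ⟨m - r, by omega⟩
  have hab_ge : m ≤ a + b := by
    have h := hmax s r (by rw [hdm, hs]; ring)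
    omega
  have habm : a + b = m := le_antisymm hab_le hab_ge
  -- minimal side
  have hsimp : n = a' * p + b' * (p + 1) := by simpa using hab'
  have hlow : n ≤ (a' + b') * (p + 1) := by nlinarith [hsimp]
  rcases Nat.eq_zero_or_pos r with hr0 | hrpos
  · -- q ∣ n, a' + b' = m
    have hge : m ≤ a' + b' := by
      have : m * (p + 1) ≤ (a' + b') * (p + 1) := by omega
      exact Nat.le_of_mul_le_mul_right this hq1
    have hle : a' + b' ≤ m := by
      have := hmin 0 m (by simp [hdm, hr0])
      simpa using this
    constructor
    · intro _; omega
    · intro hnd; exfalso; apply hnd; exact ⟨m, by rw [hdm, hr0]; ring⟩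
  · -- r ≠ 0, a' + b' = m + 1
    have hgt : m < a' + b' := by
      have h1 : m * (p + 1) < (a' + b') * (p + 1) := by omega
      exact Nat.lt_of_mul_lt_mul_right h1
    obtain ⟨P, hP⟩ : ∃ P, P = (m + 1) * p := ⟨_, rfl⟩
    have hPle : P ≤ n := by
      have h1 : (m + 1) * p ≤ (a' + b') * p := Nat.mul_le_mul_right p hgt
      have h2 : (a' + b') * p = a' * p + b' * p := by ring
      have h3 : b' * p ≤ b' * (p + 1) := Nat.mul_le_mul_left b' (by omega)
      omega
    have hnle : n < P + (m + 1) := by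
      have e2 : P + (m + 1) = m * (p + 1) + (p + 1) := by rw [hP]; ring
      omega
    obtain ⟨y, hy⟩ : ∃ y, y = n - P := ⟨_, rfl⟩
    have hyle : y ≤ m + 1 := by omega
    obtain ⟨x, hx⟩ : ∃ x, m + 1 = x + y := ⟨m + 1 - y, by omega⟩
    have hrepr : n = x * p + y * (p + 1) := by
      have e : x * p + y * (p + 1) = (x + y) * p + y := by ring
      rw [e, ← hx, ← hP]
      omega
    have hle : a' + b' ≤ m + 1 := by
      have h := hmin x y hrepr
      omega
    constructor
    · intro hd
      exfalso
      have h0 : n % (p + 1) = 0 := Nat.eq_zero_of_dvd_of_lt hd |> fun _ => Nat.mod_eq_zero_of_dvd hd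
      omega
    · intro _; omega
end

section
/- Let n₁, …, n_l be positive integers and let h = min{ q ≥ 1 : there is an index i with n_i/(q+1) > ⌊n_i/q⌋, or there are indices i ≠ j such that q divides neither n_i nor n_j }. Then the complete multipartite graph K_{n₁,…,n_l} has an equitable k-coloring for every integer k ≥ Σ_{i=1}^{l} ⌈n_i/h⌉. -/
open Finset

/-- An equitable `k`-coloring of a finite graph `G`: a proper coloring with `k` colors
in which the sizes of any two color classes differ by at most one. -/
def HasEquitableColoring {V : Type} [Fintype V] (G : SimpleGraph V) (k : ℕ) : Prop :=
  ∃ C : G.Coloring (Fin k), ∀ c₁ c₂ : Fin k,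
    (Finset.univ.filter fun v => C v = c₁).card ≤
      (Finset.univ.filter fun v => C v = c₂).card + 1

/-- ceiling division characterization -/
lemma ceilDiv_le_iff {n s a : ℕ} : (n + s) / (s + 1) ≤ a ↔ n ≤ a * (s + 1) := by
  rw [← Nat.lt_succ_iff, Nat.div_lt_iff_lt_mul (Nat.succ_pos s)]
  simp only [Nat.succ_eq_add_one]
  have : (a + 1) * (s + 1) = a * (s+1) + (s+1) := by ring
  omega

lemma div_eq_iff' {v s t : ℕ} : v / (s+1) = t ↔ t * (s+1) ≤ v ∧ v < (t+1) * (s+1) := by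
  constructor
  · rintro rfl
    exact ⟨Nat.div_mul_le_self v (s+1),
      (Nat.div_lt_iff_lt_mul (Nat.succ_pos s)).1 (Nat.lt_succ_self _)⟩
  · rintro ⟨h1, h2⟩
    have h1' : t ≤ v / (s+1) := (Nat.le_div_iff_mul_le (Nat.succ_pos s)).2 h1
    have h2' : v / (s+1) < t + 1 := (Nat.div_lt_iff_lt_mul (Nat.succ_pos s)).2 h2
    omega

lemma div_eq_iff'' {v s t : ℕ} (hs : 0 < s) : v / s = t ↔ t * s ≤ v ∧ v < (t+1) * s := by
  constructor
  · rintro rfl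
    exact ⟨Nat.div_mul_le_self v s, (Nat.div_lt_iff_lt_mul hs).1 (Nat.lt_succ_self _)⟩
  · rintro ⟨h1, h2⟩
    have h1' : t ≤ v / s := (Nat.le_div_iff_mul_le hs).2 h1
    have h2' : v / s < t + 1 := (Nat.div_lt_iff_lt_mul hs).2 h2
    omega

/-- the piece/class index of a vertex -/
def piece (s b v : ℕ) : ℕ := if v < b * (s+1) then v / (s+1) else b + (v - b * (s+1)) / s

lemma piece_lt {s b a n v : ℕ} (hs : 0 < s) (hab : n = a * s + b) (hba : b ≤ a)
    (hv : v < n) : piece s b v < a := by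
  unfold piece
  split_ifs with h1
  · have : v / (s+1) < b := (Nat.div_lt_iff_lt_mul (Nat.succ_pos s)).2
      (by calc v < b * (s+1) := h1)
    omega
  · push_neg at h1
    have hnb : b * (s+1) + (a - b) * s = n := by
      have : b * (s+1) = b * s + b := by ring
      have h2 : (a - b) * s = a * s - b * s := Nat.sub_mul a b s
      have h3 : b * s ≤ a * s := Nat.mul_le_mul_right s hba
      omega
    have h4 : v - b * (s+1) < (a - b) * s := by omega
    have h5 : (v - b * (s+1)) / s < a - b := (Nat.div_lt_iff_lt_mul hs).2 h4
    omega

lemma filter_piece_range {s b a n t : ℕ} (hs : 0 < s) (hab : n = a * s + b) (hba : b ≤ a)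
    (ht : t < a) :
    ((Finset.range n).filter fun v => piece s b v = t).card = if t < b then s + 1 else s := by
  have key : ∀ lo len : ℕ, (∀ v, (v < n ∧ piece s b v = t) ↔ (lo ≤ v ∧ v < lo + len)) →
      ((Finset.range n).filter fun v => piece s b v = t).card = len := by
    intro lo len hiff
    have : ((Finset.range n).filter fun v => piece s b v = t) = Finset.Ico lo (lo + len) := by
      ext v
      simp only [mem_filter, mem_range, Finset.mem_Ico]
      exact hiff v
    rw [this, Nat.card_Ico]; omega
  have hbs : b * (s+1) ≤ n := by
    have h1 : b * (s+1) = b * s + b := by ring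
    have h2 : b * s ≤ a * s := Nat.mul_le_mul_right s hba
    omega
  by_cases htb : t < b
  · rw [if_pos htb]
    apply key (t * (s+1)) (s+1)
    intro v
    constructor
    · rintro ⟨hv, hp⟩
      unfold piece at hp
      split_ifs at hp with h1
      · have := div_eq_iff'.1 hp
        have : (t+1) * (s+1) = t * (s+1) + (s+1) := by ring
        omega
      · have hj := Nat.zero_le ((v - b*(s+1))/s)
        omega
    · rintro ⟨h1, h2⟩
      have hvb : v < b * (s+1) := by
        have h3 : (t+1) * (s+1) ≤ b * (s+1) := Nat.mul_le_mul_right _ (by omega)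
        have : (t+1) * (s+1) = t * (s+1) + (s+1) := by ring
        omega
      refine ⟨by omega, ?_⟩
      unfold piece
      rw [if_pos hvb]
      rw [div_eq_iff']
      have : (t+1) * (s+1) = t * (s+1) + (s+1) := by ring
      omega
  · rw [if_neg htb]
    push_neg at htb
    apply key (b * (s+1) + (t - b) * s) s
    have hna : b * (s+1) + (t - b) * s + s ≤ n := by
      have h1 : b * (s+1) = b * s + b := by ring
      have h2 : (t - b) * s = t * s - b * s := Nat.sub_mul t b s
      have h3 : b * s ≤ t * s := Nat.mul_le_mul_right s htb
      have h4 : t * s + s ≤ a * s := by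
        have : (t+1) * s ≤ a * s := Nat.mul_le_mul_right s (by omega)
        have : (t+1) * s = t * s + s := by ring
        omega
      omega
    intro v
    constructor
    · rintro ⟨hv, hp⟩
      unfold piece at hp
      split_ifs at hp with h1
      · have : v / (s+1) < b := (Nat.div_lt_iff_lt_mul (Nat.succ_pos s)).2 h1
        omega
      · push_neg at h1
        have hq : (v - b * (s+1)) / s = t - b := by omega
        have := (div_eq_iff'' hs).1 hq
        have he : (t - b + 1) * s = (t - b) * s + s := by ring
        omega
    · rintro ⟨h1, h2⟩
      refine ⟨by omega, ?_⟩
      unfold piece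
      rw [if_neg (by omega)]
      have hq : (v - b * (s+1)) / s = t - b := by
        rw [div_eq_iff'' hs]
        have he : (t - b + 1) * s = (t - b) * s + s := by ring
        omega
      omega

lemma card_filter_fin (n : ℕ) (p : ℕ → Prop) [DecidablePred p] :
    (Finset.univ.filter fun v : Fin n => p v.val).card = ((Finset.range n).filter p).card := by
  apply Finset.card_bij (fun (v : Fin n) (_ : v ∈ Finset.univ.filter fun v : Fin n => p v.val) => (v : ℕ))
  · intro a ha
    simp only [mem_filter, mem_range, mem_univ, true_and] at ha ⊢
    exact ⟨a.isLt, ha⟩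
  · intro a _ b _ hab
    exact Fin.val_injective hab
  · intro b hb
    simp only [mem_filter, mem_range, mem_univ, true_and] at hb
    exact ⟨⟨b, hb.1⟩, by simp [hb.2], rfl⟩

lemma exists_sum_eq {l : ℕ} (u w : Fin l → ℕ) (huw : ∀ i, u i ≤ w i) (d : ℕ)
    (hk : ∑ i, u i + d ≤ ∑ i, w i) :
    ∃ a : Fin l → ℕ, (∀ i, u i ≤ a i ∧ a i ≤ w i) ∧ ∑ i, a i = ∑ i, u i + d := by
  induction d generalizing u with
  | zero => exact ⟨u, fun i => ⟨le_refl _, huw i⟩, by omega⟩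
  | succ d ih =>
    have hlt : ∑ i, u i < ∑ i, w i := by omega
    have : ∃ i, u i < w i := by
      by_contra hc
      push_neg at hc
      have h2 : ∑ i, w i ≤ ∑ i, u i := Finset.sum_le_sum fun i _ => hc i
      omega
    obtain ⟨i0, hi0⟩ := this
    set u' : Fin l → ℕ := Function.update u i0 (u i0 + 1) with hu'
    have hsum : ∑ i, u' i = ∑ i, u i + 1 := by
      rw [hu', Finset.sum_update_of_mem (Finset.mem_univ i0),
        ← Finset.sum_erase_add Finset.univ u (Finset.mem_univ i0), Finset.erase_eq]
      omega
    have huw' : ∀ i, u' i ≤ w i := by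
      intro i
      rcases eq_or_ne i i0 with rfl | hne
      · simp [hu']; omega
      · simp [hu', Function.update_of_ne hne]; exact huw i
    obtain ⟨a, ha1, ha2⟩ := ih u' huw' (by omega)
    refine ⟨a, fun i => ⟨?_, (ha1 i).2⟩, by omega⟩
    rcases eq_or_ne i i0 with rfl | hne
    · have := (ha1 i).1
      simp [hu'] at this
      omega
    · have := (ha1 i).1
      rwa [hu', Function.update_of_ne hne] at this

lemma exists_block (f : ℕ → ℕ) (l c : ℕ) (h0 : f 0 ≤ c) (hl : c < f l) :
    ∃ m < l, f m ≤ c ∧ c < f (m+1) := by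
  induction l with
  | zero => omega
  | succ l ih =>
    by_cases hc : f l ≤ c
    · exact ⟨l, Nat.lt_succ_self l, hc, hl⟩
    · push_neg at hc
      obtain ⟨m, hm, h1, h2⟩ := ih hc
      exact ⟨m, by omega, h1, h2⟩

lemma block_unique {f : ℕ → ℕ} (mono : Monotone f) {m m' c : ℕ}
    (h1 : f m ≤ c) (h2 : c < f (m+1)) (h3 : f m' ≤ c) (h4 : c < f (m'+1)) : m = m' := by
  rcases lt_trichotomy m m' with hlt | heq | hgt
  · have := mono (show m + 1 ≤ m' by omega)
    omega
  · exact heq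
  · have := mono (show m' + 1 ≤ m by omega)
    omega

lemma atmost_one_nondvd {l : ℕ} (n : Fin l → ℕ) (q : ℕ) (hq : 0 < q)
    (hB : ¬ ∃ i j, i ≠ j ∧ ¬ q ∣ n i ∧ ¬ q ∣ n j) :
    ∑ i, n i % q ≤ q - 1 := by
  by_cases hall : ∀ i, q ∣ n i
  · have h0 : ∑ i, n i % q = 0 :=
      Finset.sum_eq_zero fun i _ => Nat.mod_eq_zero_of_dvd (hall i)
    omega
  · push_neg at hall
    obtain ⟨j0, hj0⟩ := hall
    have hdvd : ∀ i, i ≠ j0 → q ∣ n i := by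
      intro i hi
      by_contra hce
      exact hB ⟨i, j0, hi, hce, hj0⟩
    have hs : ∑ i, n i % q = n j0 % q := by
      apply Finset.sum_eq_single_of_mem j0 (Finset.mem_univ j0)
      intro i _ hi
      exact Nat.mod_eq_zero_of_dvd (hdvd i hi)
    have := Nat.mod_lt (n j0) hq
    omega

lemma construction {l k s : ℕ} (hs : 0 < s) (n a : Fin l → ℕ)
    (has : ∀ i, a i * s ≤ n i) (han : ∀ i, n i ≤ a i * (s+1)) (hak : ∑ i, a i = k) :
    HasEquitableColoring
      (SimpleGraph.completeMultipartiteGraph fun i : Fin l => Fin (n i)) k := by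
  classical
  set b : Fin l → ℕ := fun i => n i - a i * s with hbdef
  have hb_le : ∀ i, b i ≤ a i := by
    intro i
    have e : a i * (s+1) = a i * s + a i := by ring
    have := han i
    simp only [hbdef]
    omega
  have hnb : ∀ i, n i = a i * s + b i := by
    intro i
    have := has i
    simp only [hbdef]
    omega
  set a' : ℕ → ℕ := fun m => if hm : m < l then a ⟨m, hm⟩ else 0 with ha'def
  set off : ℕ → ℕ := fun m => ∑ j ∈ Finset.range m, a' j with hoffdef
  have ha'_eq : ∀ i : Fin l, a' ↑i = a i := by
    intro i
    simp only [ha'def, dif_pos i.isLt]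
  have hoff_mono : Monotone off := fun x y hxy =>
    Finset.sum_le_sum_of_subset (Finset.range_subset_range.2 hxy)
  have hoff_succ : ∀ m, off (m+1) = off m + a' m := fun m => Finset.sum_range_succ a' m
  have hoff_zero : off 0 = 0 := Finset.sum_range_zero a'
  have hoff_l : off l = k := by
    rw [hoffdef]
    simp only
    rw [← Fin.sum_univ_eq_sum_range a' l]
    rw [← hak]
    exact Finset.sum_congr rfl fun i _ => ha'_eq i
  set cv : (Σ i : Fin l, Fin (n i)) → ℕ := fun x => off ↑x.1 + piece s (b x.1) ↑x.2
    with hcvdef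
  have hpiece_lt : ∀ x : (Σ i : Fin l, Fin (n i)), piece s (b x.1) ↑x.2 < a x.1 :=
    fun x => piece_lt hs (hnb x.1) (hb_le x.1) x.2.isLt
  have hcv_lb : ∀ x, off ↑x.1 ≤ cv x := fun x => Nat.le_add_right _ _
  have hcv_ub : ∀ x, cv x < off (↑x.1 + 1) := by
    intro x
    rw [hoff_succ, ha'_eq x.1]
    exact Nat.add_lt_add_left (hpiece_lt x) _
  have hcv_k : ∀ x, cv x < k := by
    intro x
    have h1 := hcv_ub x
    have h2 : off (↑x.1 + 1) ≤ off l := hoff_mono x.1.isLt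
    omega
  set C : (SimpleGraph.completeMultipartiteGraph fun i : Fin l => Fin (n i)).Coloring (Fin k) :=
    SimpleGraph.Coloring.mk (fun x => ⟨cv x, hcv_k x⟩) (by
      intro x y hadj heq
      simp only [SimpleGraph.completeMultipartiteGraph, SimpleGraph.comap_adj,
        SimpleGraph.top_adj] at hadj
      have hval : cv x = cv y := by
        simpa [Fin.ext_iff] using heq
      have := block_unique hoff_mono (hcv_lb x) (hcv_ub x)
        (hval ▸ hcv_lb y) (hval ▸ hcv_ub y)
      exact hadj (Fin.ext this)) with hCdef
  refine ⟨C, ?_⟩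
  have key : ∀ cc : Fin k,
      s ≤ (Finset.univ.filter fun x => C x = cc).card ∧
      (Finset.univ.filter fun x => C x = cc).card ≤ s + 1 := by
    intro cc
    obtain ⟨m, hml, hb1, hb2⟩ := exists_block off l ↑cc (by omega) (by rw [hoff_l]; exact cc.isLt)
    set i0 : Fin l := ⟨m, hml⟩ with hi0def
    have hfeq : (Finset.univ.filter fun x => C x = cc)
        = Finset.univ.filter fun x : (Σ i : Fin l, Fin (n i)) => cv x = ↑cc := by
      ext x
      simp only [Finset.mem_filter, Finset.mem_univ, true_and, hCdef, Fin.ext_iff]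
      exact Iff.rfl
    have hsigma : (Finset.univ.filter fun x : (Σ i : Fin l, Fin (n i)) => cv x = ↑cc)
        = Finset.univ.sigma fun i : Fin l =>
            Finset.univ.filter fun v : Fin (n i) => cv ⟨i, v⟩ = ↑cc := by
      ext ⟨i, v⟩
      simp [Finset.mem_sigma]
    have hcard : (Finset.univ.filter fun x => C x = cc).card
        = ∑ i : Fin l, (Finset.univ.filter fun v : Fin (n i) => cv ⟨i, v⟩ = ↑cc).card := by
      rw [hfeq, hsigma, Finset.card_sigma]
    have hzero : ∀ i : Fin l, i ≠ i0 →
        (Finset.univ.filter fun v : Fin (n i) => cv ⟨i, v⟩ = ↑cc).card = 0 := by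
      intro i hne
      rw [Finset.card_eq_zero, Finset.filter_eq_empty_iff]
      intro v _
      intro hEq
      have h1 : off ↑i ≤ ↑cc := hEq ▸ hcv_lb ⟨i, v⟩
      have h2 : ↑cc < off (↑i + 1) := hEq ▸ hcv_ub ⟨i, v⟩
      have : (↑i : ℕ) = m := block_unique hoff_mono h1 h2 hb1 hb2
      exact hne (Fin.ext this)
    have hmain : (Finset.univ.filter fun x => C x = cc).card
        = (Finset.univ.filter fun v : Fin (n i0) => cv ⟨i0, v⟩ = ↑cc).card := by
      rw [hcard]
      exact Finset.sum_eq_single_of_mem i0 (Finset.mem_univ i0) fun i _ hne => hzero i hne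
    set t : ℕ := ↑cc - off m with htdef
    have ht_lt : t < a i0 := by
      have h3 : ↑cc < off m + a i0 := by
        have := hoff_succ m
        have := ha'_eq i0
        simp only [hi0def] at this ⊢
        omega
      omega
    have hfilter2 : (Finset.univ.filter fun v : Fin (n i0) => cv ⟨i0, v⟩ = ↑cc)
        = Finset.univ.filter fun v : Fin (n i0) => piece s (b i0) ↑v = t := by
      apply Finset.filter_congr
      intro v _
      simp only [hcvdef, eq_iff_iff]
      constructor
      · intro hp
        simp only [hi0def] at hp ⊢
        omega
      · intro hp
        simp only [hi0def] at hp ⊢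
        omega
    have hcount : (Finset.univ.filter fun v : Fin (n i0) => piece s (b i0) ↑v = t).card
        = if t < b i0 then s + 1 else s := by
      rw [card_filter_fin (n i0) (fun v => piece s (b i0) v = t)]
      exact filter_piece_range hs (hnb i0) (hb_le i0) ht_lt
    rw [hmain, hfilter2, hcount]
    split_ifs <;> omega
  intro c1 c2
  have k1 := key c1
  have k2 := key c2
  omega

/-- trivial case: more colors than vertices -/
lemma injective_case {l k : ℕ} (n : Fin l → ℕ) (hNk : ∑ i, n i ≤ k) :
    HasEquitableColoring
      (SimpleGraph.completeMultipartiteGraph fun i : Fin l => Fin (n i)) k := by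
  classical
  have hcard : Fintype.card ((i : Fin l) × Fin (n i)) ≤ Fintype.card (Fin k) := by
    simpa [Fintype.card_sigma] using hNk
  obtain ⟨e⟩ := Function.Embedding.nonempty_of_card_le hcard
  set C : (SimpleGraph.completeMultipartiteGraph fun i : Fin l => Fin (n i)).Coloring (Fin k) :=
    SimpleGraph.Coloring.mk e (fun {x y} hadj heq => hadj.ne (e.injective heq)) with hCdef
  refine ⟨C, ?_⟩
  intro c1 c2
  have h1 : ∀ c : Fin k, (Finset.univ.filter fun v => C v = c).card ≤ 1 := by
    intro c
    apply Finset.card_le_one.2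
    intro x hx y hy
    simp only [Finset.mem_filter, hCdef] at hx hy
    exact e.injective (hx.2.trans hy.2.symm)
  have := h1 c1
  omega

/-- Let `n₁, …, n_l` be positive integers and let `h` be the minimum
positive integer `q` such that `n_i/(q+1) > ⌊n_i/q⌋` for some `i`, or `q` divides
neither `n_i` nor `n_j` for some `i ≠ j`. Then `K_{n₁,…,n_l}` has an equitable
`k`-coloring for every `k ≥ ∑ ⌈n_i/h⌉`. -/
theorem equitable_colorable_above_threshold (l : ℕ) (hl : 0 < l) (n : Fin l → ℕ)
    (hn : ∀ i, 0 < n i) (h : ℕ)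
    (hh : IsLeast {q : ℕ | 0 < q ∧
      ((∃ i, (n i : ℚ) / ((q : ℚ) + 1) > ((n i / q : ℕ) : ℚ)) ∨
        ∃ i j, i ≠ j ∧ ¬ q ∣ n i ∧ ¬ q ∣ n j)} h) :
    ∀ k : ℕ, (∑ i, ⌈(n i : ℚ) / (h : ℚ)⌉₊) ≤ k →
      HasEquitableColoring
        (SimpleGraph.completeMultipartiteGraph fun i : Fin l => Fin (n i)) k := by
  intro k hk
  classical
  obtain ⟨⟨hhpos, _⟩, hmin⟩ := hh
  set c : Fin l → ℕ := fun i => ⌈(n i : ℚ) / (h : ℚ)⌉₊ with hcdef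
  have hch : ∀ i, n i ≤ c i * h := by
    intro i
    have h1 : (n i : ℚ) / h ≤ c i := Nat.le_ceil _
    have h2 : (n i : ℚ) ≤ (c i : ℚ) * h := by
      rwa [div_le_iff₀ (by exact_mod_cast hhpos : (0:ℚ) < h)] at h1
    exact_mod_cast h2
  have hK0 : ∑ i, c i ≤ k := hk
  have hkpos : 0 < k := by
    have h1 : 1 ≤ c ⟨0, hl⟩ := Nat.one_le_ceil_iff.2
      (div_pos (by exact_mod_cast hn ⟨0, hl⟩) (by exact_mod_cast hhpos))
    have h2 := Finset.single_le_sum (f := c) (fun i _ => Nat.zero_le _) (Finset.mem_univ ⟨0, hl⟩)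
    omega
  set N : ℕ := ∑ i, n i with hNdef
  by_cases hNk : N ≤ k
  · exact injective_case n hNk
  push_neg at hNk
  -- now k < N, so s ≥ 1
  set s : ℕ := N / k with hsdef
  have hs : 0 < s := (Nat.one_le_div_iff hkpos).2 (le_of_lt hNk)
  have hks : k * s ≤ N := by
    rw [hsdef, mul_comm]
    exact Nat.div_mul_le_self N k
  have hNks : N < k * (s + 1) := by
    have h1 := Nat.div_add_mod N k
    have h2 := Nat.mod_lt N hkpos
    have h3 : k * (s + 1) = k * (N / k) + k := by rw [hsdef]; ring
    omega
  have hNK0 : N ≤ (∑ i, c i) * h := by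
    calc N ≤ ∑ i, c i * h := Finset.sum_le_sum fun i _ => hch i
    _ = (∑ i, c i) * h := (Finset.sum_mul _ _ _).symm
  have hsh : s ≤ h := by
    have h1 : k * s ≤ k * h := by
      calc k * s ≤ N := hks
      _ ≤ (∑ i, c i) * h := hNK0
      _ ≤ k * h := Nat.mul_le_mul_right h hK0
    exact Nat.le_of_mul_le_mul_left h1 hkpos
  set u : Fin l → ℕ := fun i => (n i + s) / (s + 1) with hudef
  set w : Fin l → ℕ := fun i => n i / s with hwdef
  -- key bounds
  have hmain : (∀ i, u i ≤ w i) ∧ (∑ i, u i ≤ k) ∧ (k ≤ ∑ i, w i) := by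
    rcases eq_or_lt_of_le hsh with heq | hlt
    · -- s = h : everything is tight
      have h1 : k * h ≤ N := heq ▸ hks
      have h2 : (∑ i, c i) * h ≤ k * h := Nat.mul_le_mul_right h hK0
      have h3 : k * h = N := le_antisymm h1 (le_trans hNK0 h2)
      have h4 : (∑ i, c i) * h = N := le_antisymm (by omega) (by omega)
      have h5 : ∑ i, n i = ∑ i, c i * h := by
        rw [← hNdef, ← Finset.sum_mul]
        omega
      have h6 : ∀ i, n i = c i * h := fun i =>
        (Finset.sum_eq_sum_iff_of_le (fun i _ => hch i)).1 h5 i (Finset.mem_univ i)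
      have hw_eq : ∀ i, w i = c i := by
        intro i
        rw [hwdef]
        simp only
        rw [h6 i, ← heq] at *
        exact Nat.mul_div_cancel _ hs
      have hu_le : ∀ i, u i ≤ c i := by
        intro i
        apply ceilDiv_le_iff.2
        calc n i ≤ c i * h := hch i
        _ ≤ c i * (s + 1) := Nat.mul_le_mul_left _ (by omega)
      refine ⟨fun i => (hu_le i).trans (hw_eq i).ge, ?_, ?_⟩
      · calc ∑ i, u i ≤ ∑ i, c i := Finset.sum_le_sum fun i _ => hu_le i
        _ ≤ k := hK0
      · have : ∑ i, w i = ∑ i, c i := Finset.sum_congr rfl fun i _ => hw_eq i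
        rw [this]
        -- k * h = N = (∑ c) * h, so k = ∑ c
        have : k = ∑ i, c i := Nat.eq_of_mul_eq_mul_right hhpos (by omega)
        omega
    · -- s < h
      have hnotmem : ∀ q, 0 < q → q < h →
          (∀ i, n i ≤ (n i / q) * (q + 1)) ∧ (¬ ∃ i j, i ≠ j ∧ ¬ q ∣ n i ∧ ¬ q ∣ n j) := by
        intro q hq0 hqh
        have hqn : q ∉ {q : ℕ | 0 < q ∧
            ((∃ i, (n i : ℚ) / ((q : ℚ) + 1) > ((n i / q : ℕ) : ℚ)) ∨
              ∃ i j, i ≠ j ∧ ¬ q ∣ n i ∧ ¬ q ∣ n j)} := fun hm => absurd (hmin hm) (by omega)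
        simp only [Set.mem_setOf_eq, not_and, not_or] at hqn
        have ⟨hA, hB⟩ := hqn hq0
        push_neg at hA
        refine ⟨fun i => ?_, hB⟩
        have h1 := hA i
        rw [div_le_iff₀ (by positivity : (0:ℚ) < (q:ℚ) + 1)] at h1
        have h2 : (n i : ℚ) ≤ ((n i / q * (q + 1) : ℕ) : ℚ) := by push_cast; linarith
        exact_mod_cast h2
      obtain ⟨hAs, hBs⟩ := hnotmem s hs hlt
      have P3 : ∀ i, u i ≤ w i := fun i => ceilDiv_le_iff.2 (hAs i)
      have P2 : k ≤ ∑ i, w i := by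
        have hmod := atmost_one_nondvd n s hs hBs
        have hNs : N = s * ∑ i, w i + ∑ i, n i % s := by
          rw [Finset.mul_sum, ← Finset.sum_add_distrib, hNdef]
          exact Finset.sum_congr rfl fun i _ => (Nat.div_add_mod (n i) s).symm
        by_contra hcon
        push_neg at hcon
        have h3 : s * (∑ i, w i + 1) ≤ s * k := Nat.mul_le_mul_left s hcon
        have h4 : s * (∑ i, w i + 1) = s * ∑ i, w i + s := by ring
        have h5 : s * k = k * s := mul_comm s k
        omega
      have P1 : ∑ i, u i ≤ k := by
        by_cases hsh1 : h ≤ s + 1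
        · have hu_le : ∀ i, u i ≤ c i := by
            intro i
            apply ceilDiv_le_iff.2
            calc n i ≤ c i * h := hch i
            _ ≤ c i * (s + 1) := Nat.mul_le_mul_left _ hsh1
          calc ∑ i, u i ≤ ∑ i, c i := Finset.sum_le_sum fun i _ => hu_le i
          _ ≤ k := hK0
        · push_neg at hsh1
          obtain ⟨_, hBs1⟩ := hnotmem (s+1) (Nat.succ_pos s) hsh1
          -- (s+1) * ∑ u ≤ N + s
          have hkey : (s+1) * ∑ i, u i ≤ N + s := by
            rw [Finset.mul_sum]
            by_cases hall : ∀ i, (s+1) ∣ n i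
            · have he : ∀ i, (s+1) * u i = n i := by
                intro i
                obtain ⟨m, hm⟩ := hall i
                rw [hudef]
                simp only
                rw [hm, Nat.mul_add_div (Nat.succ_pos s), Nat.div_eq_of_lt (by omega)]
                ring
              calc (∑ i, (s+1) * u i) = ∑ i, n i := Finset.sum_congr rfl fun i _ => he i
              _ ≤ N + s := by omega
            · push_neg at hall
              obtain ⟨j0, hj0⟩ := hall
              have hdvd : ∀ i, i ≠ j0 → (s+1) ∣ n i := by
                intro i hi
                by_contra hce
                exact hBs1 ⟨i, j0, hi, hce, hj0⟩
              have hle : ∀ i, (s+1) * u i ≤ n i + (if i = j0 then s else 0) := by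
                intro i
                rcases eq_or_ne i j0 with rfl | hne
                · simp only [if_pos rfl]
                  rw [hudef, mul_comm]
                  exact Nat.div_mul_le_self (n i + s) (s+1)
                · simp only [if_neg hne, hudef]
                  obtain ⟨m, hm⟩ := hdvd i hne
                  rw [hm, Nat.mul_add_div (Nat.succ_pos s), Nat.div_eq_of_lt (by omega)]
                  simp
              calc (∑ i, (s+1) * u i) ≤ ∑ i, (n i + if i = j0 then s else 0) :=
                    Finset.sum_le_sum fun i _ => hle i
              _ = N + s := by
                  rw [Finset.sum_add_distrib, Finset.sum_ite_eq' Finset.univ j0 fun _ => s]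
                  simp [hNdef]
          have h6 : N + s < (s+1) * (k+1) := by
            have : (s+1) * (k+1) = k * (s+1) + s + 1 := by ring
            omega
          have h7 : (s+1) * ∑ i, u i < (s+1) * (k+1) := by omega
          have := Nat.lt_of_mul_lt_mul_left h7
          omega
      exact ⟨P3, P1, P2⟩
  obtain ⟨P3, P1, P2⟩ := hmain
  obtain ⟨a, ha1, ha2⟩ := exists_sum_eq u w P3 (k - ∑ i, u i) (by omega)
  have hak : ∑ i, a i = k := by omega
  apply construction hs n a
  · intro i
    have := (ha1 i).2
    rw [hwdef] at this
    exact (Nat.le_div_iff_mul_le hs).1 this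
  · intro i
    exact ceilDiv_le_iff.1 (ha1 i).1
  · exact hak
end

section
/- Let n₁, …, n_l be positive integers, let h = min{ q ≥ 1 : there is an index i with n_i/(q+1) > ⌊n_i/q⌋, or there are indices i ≠ j such that q divides neither n_i nor n_j }, let q be a positive integer, and suppose each n_i has a q-partition n_i = a_i·q + b_i·(q+1) with Σ_{i=1}^{l}(a_i + b_i) ≥ Σ_{i=1}^{l} ⌈n_i/h⌉. Then q ≤ h − 1. -/
/-- Let `n₁, …, n_l` be positive integers and let `h` be the minimum
positive integer `q` such that `n_i/(q+1) > ⌊n_i/q⌋` for some `i`, or `q` divides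
neither `n_i` nor `n_j` for some `i ≠ j`. If `q` is a positive integer and each `n_i`
has a `q`-partition `n_i = a_i*q + b_i*(q+1)` with
`∑ (a_i + b_i) ≥ ∑ ⌈n_i/h⌉`, then `q ≤ h - 1`. -/
theorem claim1 (l : ℕ) (hl : 0 < l) (n : Fin l → ℕ) (hn : ∀ i, 0 < n i) (h : ℕ)
    (hh : IsLeast {q : ℕ | 0 < q ∧
      ((∃ i, (n i : ℚ) / ((q : ℚ) + 1) > ((n i / q : ℕ) : ℚ)) ∨
        ∃ i j, i ≠ j ∧ ¬ q ∣ n i ∧ ¬ q ∣ n j)} h)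
    (q : ℕ) (hq : 0 < q) (a b : Fin l → ℕ)
    (hpart : ∀ i, n i = a i * q + b i * (q + 1))
    (hsum : ∑ i, ⌈(n i : ℚ) / (h : ℚ)⌉₊ ≤ ∑ i, (a i + b i)) :
    q ≤ h - 1 := by
  obtain ⟨⟨hhpos, hcond⟩, hmin⟩ := hh
  by_contra hcon
  push_neg at hcon
  have hle : h ≤ q := by omega
  -- pointwise: a i + b i ≤ n i / h
  have hab : ∀ i, a i + b i ≤ n i / h := by
    intro i
    have h1 : (a i + b i) * q ≤ n i := by
      rw [hpart i]; nlinarith [Nat.zero_le (b i)]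
    calc a i + b i ≤ n i / q := (Nat.le_div_iff_mul_le hq).mpr h1
      _ ≤ n i / h := Nat.div_le_div_left hle hhpos
  -- pointwise: n i / h ≤ ⌈(n i:ℚ)/h⌉₊
  have hfc : ∀ i, n i / h ≤ ⌈(n i : ℚ) / (h : ℚ)⌉₊ := by
    intro i
    have h1 : ((n i / h : ℕ) : ℚ) ≤ (n i : ℚ) / (h : ℚ) := Nat.cast_div_le
    exact_mod_cast h1.trans (Nat.le_ceil _)
  -- sums are all equal
  have hs1 : ∑ i, (a i + b i) ≤ ∑ i, n i / h :=
    Finset.sum_le_sum fun i _ => hab i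
  have hs2 : ∑ i, n i / h ≤ ∑ i, ⌈(n i : ℚ) / (h : ℚ)⌉₊ :=
    Finset.sum_le_sum fun i _ => hfc i
  have hseq : ∑ i, n i / h = ∑ i, ⌈(n i : ℚ) / (h : ℚ)⌉₊ := le_antisymm hs2 (by omega)
  have heq : ∀ i, n i / h = ⌈(n i : ℚ) / (h : ℚ)⌉₊ := by
    intro i
    exact (Finset.sum_eq_sum_iff_of_le (fun i _ => hfc i)).mp hseq i (Finset.mem_univ i)
  -- hence h ∣ n i for all i
  have hdvd : ∀ i, h ∣ n i := by
    intro i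
    have h1 : (n i : ℚ) / (h : ℚ) ≤ ((n i / h : ℕ) : ℚ) := by
      have := (Nat.ceil_le (α := ℚ)).mp (le_of_eq (heq i).symm)
      exact this
    have hh0 : (0:ℚ) < (h:ℚ) := by exact_mod_cast hhpos
    have h2 : (n i : ℚ) ≤ ((n i / h : ℕ) : ℚ) * (h : ℚ) := by
      rw [← div_le_iff₀ hh0]; exact h1
    have h3 : n i ≤ n i / h * h := by exact_mod_cast h2
    have h4 : n i / h * h ≤ n i := Nat.div_mul_le_self _ _
    exact Dvd.intro_left _ (le_antisymm h4 h3)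
  rcases hcond with ⟨i, hi⟩ | ⟨i, j, hij, hi, hj⟩
  · have hcast : ((n i / h : ℕ) : ℚ) = (n i : ℚ) / (h : ℚ) := by
      rw [Nat.cast_div (hdvd i) (by exact_mod_cast hhpos.ne')]
    rw [hcast] at hi
    have hn0 : (0:ℚ) < (n i : ℚ) := by exact_mod_cast hn i
    have hh0 : (0:ℚ) < (h:ℚ) := by exact_mod_cast hhpos
    have : (n i : ℚ) / ((h:ℚ) + 1) < (n i : ℚ) / (h : ℚ) := by
      apply div_lt_div_of_pos_left hn0 hh0; linarith
    linarith
  · exact hi (hdvd i)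
end

section
/- Let n₁, …, n_l be positive integers and let h be the minimal positive integer with the property that there exist distinct indices i ≠ j with h ∤ n_i and h ∤ n_j (so that for every positive integer q < h, q divides all the n_i with at most one exception), and suppose that for every positive integer q < h every n_i admits a q-partition. Then for any such pair i ≠ j and any choices of maximal h-partitions n_i = a_i·h + b_i·(h+1), n_j = a_j·h + b_j·(h+1) and minimal (h−1)-partitions n_i = a_i′·(h−1) + b_i′·h, n_j = a_j′·(h−1) + b_j′·h, one has a_i + b_i + a_j + b_j = a_i′ + b_i′ + a_j′ + b_j′ − 2. -/
lemma case2_unique (c A q r r' : ℕ) (hc : 0 < c) (hr : r < c) (hr' : r' < c)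
    (e : A * c + r' = q * c + r) : A = q ∧ r' = r := by
  rcases lt_trichotomy A q with hlt | heq | hgt
  · have h1 : (A + 1) * c ≤ q * c := Nat.mul_le_mul_right c hlt
    have h2 : (A + 1) * c = A * c + c := by ring
    linarith
  · refine ⟨heq, ?_⟩
    subst heq
    exact Nat.add_left_cancel e
  · have h1 : (q + 1) * c ≤ A * c := Nat.mul_le_mul_right c hgt
    have h2 : (q + 1) * c = q * c + c := by ring
    linarith

lemma case2_aux (p m : ℕ) (hnd : ¬ (p + 2) ∣ m)
    (a b a' b' : ℕ)
    (hab : m = a * (p + 2) + b * (p + 3))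
    (hmax : ∀ x y : ℕ, m = x * (p + 2) + y * (p + 3) → x + y ≤ a + b)
    (hab' : m = a' * (p + 1) + b' * (p + 2))
    (hmin : ∀ x y : ℕ, m = x * (p + 1) + y * (p + 2) → a' + b' ≤ x + y) :
    a + b + 1 = a' + b' := by
  obtain ⟨q, r, hqr, hrlt, hrpos⟩ : ∃ q r : ℕ, m = q * (p + 2) + r ∧ r < p + 2 ∧ 0 < r := by
    refine ⟨m / (p + 2), m % (p + 2), ?_, Nat.mod_lt _ (by omega),
      Nat.pos_of_ne_zero fun e => hnd (Nat.dvd_of_mod_eq_zero e)⟩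
    rw [Nat.mul_comm]
    exact (Nat.div_add_mod m (p + 2)).symm
  obtain ⟨k, r', hbk, hr'lt⟩ : ∃ k r', b = k * (p + 2) + r' ∧ r' < p + 2 :=
    ⟨b / (p + 2), b % (p + 2), by rw [Nat.mul_comm]; exact (Nat.div_add_mod b (p + 2)).symm,
      Nat.mod_lt _ (by omega)⟩
  subst hbk
  have e : (a + (k * (p + 2) + r') + k) * (p + 2) + r' = q * (p + 2) + r := by
    have h1 : a * (p + 2) + (k * (p + 2) + r') * (p + 3)
        = (a + (k * (p + 2) + r') + k) * (p + 2) + r' := by ring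
    rw [← h1, ← hab, hqr]
  obtain ⟨hAq, hrr⟩ := case2_unique (p + 2) _ q r r' (by omega) hrlt hr'lt e
  subst hrr
  -- q ≥ r'
  have hrq : r' ≤ q := by
    have h0 : 0 ≤ k * (p + 2) := Nat.zero_le _
    omega
  -- maximality gives a + b = q  (b = k*(p+2) + r')
  obtain ⟨mm, hm⟩ : ∃ mm, q = mm + r' := ⟨q - r', by omega⟩
  have hwit1 : m = mm * (p + 2) + r' * (p + 3) := by rw [hqr, hm]; ring
  have hge := hmax mm r' hwit1
  have habq : a + (k * (p + 2) + r') = q := by omega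
  -- minimal side
  have e' : m = (a' + b') * (p + 1) + b' := by rw [hab']; ring
  have hs'h : m ≤ (a' + b') * (p + 2) := by nlinarith
  have hs'lb : q < a' + b' := by
    by_contra hq'
    push_neg at hq'
    have h1 : (a' + b') * (p + 2) ≤ q * (p + 2) := Nat.mul_le_mul_right _ hq'
    linarith
  have hnlb : (q + 1) * (p + 1) ≤ m := by
    have h1 : (q + 1) * (p + 1) ≤ (a' + b') * (p + 1) := Nat.mul_le_mul_right _ (by omega)
    linarith
  have hnub : m ≤ (q + 1) * (p + 2) := by
    have h1 : (q + 1) * (p + 2) = q * (p + 2) + (p + 2) := by ring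
    linarith
  obtain ⟨y, hy⟩ : ∃ y, m = (q + 1) * (p + 1) + y :=
    ⟨m - (q + 1) * (p + 1), (Nat.add_sub_cancel' hnlb).symm⟩
  obtain ⟨x, hx⟩ : ∃ x, (q + 1) * (p + 2) = m + x :=
    ⟨(q + 1) * (p + 2) - m, (Nat.add_sub_cancel' hnub).symm⟩
  have hA : (q + 1) * (p + 2) = (q + 1) * (p + 1) + (q + 1) := by ring
  have hxy : x + y = q + 1 := by linarith
  have hwit2 : m = x * (p + 1) + y * (p + 2) := by rw [hy, ← hxy]; ring
  have hle := hmin x y hwit2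
  omega


/-- Let `n₁, …, n_l` be positive integers and let `h` be a positive
integer such that `h` divides neither `n_i` nor `n_j` for some pair of distinct indices
`i ≠ j`, while for every positive integer `q < h` every `n_i` admits a `q`-partition
and `q` divides all the `n_i` with at most one exception. If in addition `h` is minimal
with the property that there exist distinct indices with neither entry divisible by `h`,
then for any maximal `h`-partitions `n_i = aᵢ*h + bᵢ*(h+1)`, `n_j = aⱼ*h + bⱼ*(h+1)`
and minimal `(h-1)`-partitions `n_i = aᵢ'*(h-1) + bᵢ'*h`, `n_j = aⱼ'*(h-1) + bⱼ'*h`,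
one has `aᵢ + bᵢ + aⱼ + bⱼ = aᵢ' + bᵢ' + aⱼ' + bⱼ' - 2`. -/
theorem case2_count (l : ℕ) (hl : 0 < l) (n : Fin l → ℕ) (hn : ∀ i, 0 < n i)
    (h : ℕ) (hh : 0 < h) (i j : Fin l) (hij : i ≠ j)
    (hi : ¬ h ∣ n i) (hj : ¬ h ∣ n j)
    (hbelow : ∀ q : ℕ, 0 < q → q < h →
      (∀ i' : Fin l, ∃ a b : ℕ, n i' = a * q + b * (q + 1)) ∧
      (∀ i' j' : Fin l, i' ≠ j' → q ∣ n i' ∨ q ∣ n j'))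
    (hmin : ∀ q : ℕ, 0 < q →
      (∃ i' j' : Fin l, i' ≠ j' ∧ ¬ q ∣ n i' ∧ ¬ q ∣ n j') → h ≤ q)
    (ai bi aj bj ai' bi' aj' bj' : ℕ)
    (habi : n i = ai * h + bi * (h + 1))
    (hmaxi : ∀ x y : ℕ, n i = x * h + y * (h + 1) → x + y ≤ ai + bi)
    (habj : n j = aj * h + bj * (h + 1))
    (hmaxj : ∀ x y : ℕ, n j = x * h + y * (h + 1) → x + y ≤ aj + bj)
    (habi' : n i = ai' * (h - 1) + bi' * h)
    (hmini' : ∀ x y : ℕ, n i = x * (h - 1) + y * h → ai' + bi' ≤ x + y)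
    (habj' : n j = aj' * (h - 1) + bj' * h)
    (hminj' : ∀ x y : ℕ, n j = x * (h - 1) + y * h → aj' + bj' ≤ x + y) :
    ai + bi + aj + bj = ai' + bi' + aj' + bj' - 2 := by
  have h2 : 2 ≤ h := by
    have : h ≠ 1 := fun e => hi (e ▸ one_dvd _)
    omega
  obtain ⟨p, rfl⟩ : ∃ p, h = p + 2 := ⟨h - 2, by omega⟩
  have hsub : p + 2 - 1 = p + 1 := by omega
  rw [hsub] at habi' hmini' habj' hminj'
  have e1 := case2_aux p (n i) hi ai bi ai' bi' habi hmaxi habi' hmini'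
  have e2 := case2_aux p (n j) hj aj bj aj' bj' habj hmaxj habj' hminj'
  omega
end
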